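/- For every ω-sequence T̄ = ⟨T_n : n < ω⟩ of (2,2)-trees, the following are equivalent: (a) degsq(T̄) = ∞; (b) degsq(T̄) ≥ ω₁; (c) the set ⋃_{n<ω} lim(T_n) contains a perfect square P × P with P ⊆ 2^ω a nonempty perfect set. -/

import Mathlib

/-!
Call a family `S` of configurations *splitting* when each member satisfies the condition
`degsq ≥ -1` and can be split at any of its nodes into another member of `S`. By induction on
`α`, every member of a splitting family has `degsq ≥ α` for all `α`. Conversely, the
configurations of degree `≥ β` for every `β < ω₁` form a splitting family: a node admits only
countably many candidate splittings, so one of them must work for cofinally many `β < ω₁`.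

A splitting family yields a perfect square by fusion: splitting every node over and over gives a
sequence of refining configurations whose branches form a perfect set `P`. Along the sequence the
colour of a pair of branches stops changing once the two have separated, and the pair lies in
`lim T_c` for that eventual colour `c`.

A perfect square `P × P` yields the splitting family of configurations whose nodes carry
nonempty perfect pieces of `P` on whose products the colouring is realised. To split a node,
Baire category in `2^ω × 2^ω` shrinks its piece to two perfect sets `A`, `B`, separated at some
coordinate, with `A × B ⊆ lim T_{c₁}` and `B × A ⊆ lim T_{c₂}`.
-/

open FirstOrder Cardinal

namespace Sh522

/-- A `(2,2)`-tree: a set of pairs `(σ, τ)` with `σ, τ ∈ 2^n`, closed under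
simultaneous restriction. -/
structure Tree2 : Type where
  mem : ∀ n : ℕ, Set ((Fin n → Bool) × (Fin n → Bool))
  closed : ∀ (n : ℕ) (x : (Fin n → Bool) × (Fin n → Bool)),
    x ∈ mem n → ∀ (m : ℕ) (h : m ≤ n),
      ((fun i => x.1 (Fin.castLE h i)), (fun i => x.2 (Fin.castLE h i))) ∈ mem m

/-- `lim T = {(η,ν) ∈ 2^ω × 2^ω : ∀ n, (η↾n, ν↾n) ∈ T}`. -/
def lim2 (T : Tree2) : Set ((ℕ → Bool) × (ℕ → Bool)) :=
  {p | ∀ n : ℕ, ((fun i : Fin n => p.1 i), (fun i : Fin n => p.2 i)) ∈ T.mem n}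

/-- The domain of the square degree: pairs `(u, g)` with `u ⊆ 2^n` and
`g` a 2-place `ω`-valued function (only its values on `u` matter). -/
def PfAp : Type :=
  Σ n : ℕ, Set (Fin n → Bool) × ((Fin n → Bool) → (Fin n → Bool) → ℕ)

/-- `degsq_{T̄}(u,g) ≥ −1` : `u` is nonempty and `(η,ν) ∈ T_{g(η,ν)}` for `η,ν ∈ u`. -/
def degsqBase (Tb : ℕ → Tree2) (x : PfAp) : Prop :=
  x.2.1.Nonempty ∧ ∀ η ∈ x.2.1, ∀ ν ∈ x.2.1, (η, ν) ∈ (Tb (x.2.2 η ν)).mem x.1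

/-- The successor step for the square degree: `degsq_{T̄}(u,g) ≥ β + 1` where `P`
is `degsq_{T̄}(−) ≥ β`. -/
def degsqStep (P : PfAp → Prop) (x : PfAp) : Prop :=
  x.2.1.Nonempty ∧
  ∀ ρ ∈ x.2.1, ∃ (m : ℕ) (hle : x.1 ≤ m) (u : Set (Fin m → Bool))
      (g : (Fin m → Bool) → (Fin m → Bool) → ℕ)
      (h : Fin 2 → (Fin x.1 → Bool) → (Fin m → Bool)),
    (∀ (i : Fin 2), ∀ η ∈ x.2.1, ∀ j : Fin x.1, h i η (Fin.castLE hle j) = η j) ∧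
    (∀ η ∈ x.2.1, (h 0 η = h 1 η ↔ η ≠ ρ)) ∧
    u = h 0 '' x.2.1 ∪ h 1 '' x.2.1 ∧
    (∀ (i : Fin 2), ∀ η ∈ x.2.1, ∀ ν ∈ x.2.1, g (h i η) (h i ν) = x.2.2 η ν) ∧
    P ⟨m, u, g⟩

/-- `degsqGe T̄ α x` says `degsq_{T̄}(x) ≥ α` (for ordinals `α ≥ 0`). -/
noncomputable def degsqGe (Tb : ℕ → Tree2) (α : Ordinal.{0}) : PfAp → Prop :=
  Ordinal.limitRecOn (motive := fun _ => PfAp → Prop) α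
    (degsqStep (degsqBase Tb))
    (fun _ ih => degsqStep ih)
    (fun o _ ih x => ∀ (β : Ordinal.{0}) (h : β < o), ih β h x)
end Sh522

open Filter Topology Ordinal

section Topology

variable {X : Type*} [TopologicalSpace X] {C D : Set X}

theorem Perfect.inter_isClopen {U : Set X} (hC : Perfect C) (hU : IsClopen U) :
    Perfect (C ∩ U) :=
  ⟨hC.closed.inter hU.isClosed, Set.inter_comm U C ▸ hC.acc.open_inter hU.isOpen⟩

theorem Perfect.union (hC : Perfect C) (hD : Perfect D) : Perfect (C ∪ D) := by
  refine ⟨hC.closed.union hD.closed, fun x hx => ?_⟩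
  rcases hx with hx | hx
  exacts [(hC.acc x hx).mono (Filter.principal_mono.2 Set.subset_union_left),
    (hD.acc x hx).mono (Filter.principal_mono.2 Set.subset_union_right)]

theorem IsClosed.exists_isOpen_inter_subset [CompactSpace X] [T2Space X] {K : Set X}
    (hK : IsClosed K) (hne : K.Nonempty) {F : ℕ → Set X} (hF : ∀ n, IsClosed (F n))
    (hKF : K ⊆ ⋃ n, F n) : ∃ n V, IsOpen V ∧ (K ∩ V).Nonempty ∧ K ∩ V ⊆ F n := by
  have : CompactSpace K := isCompact_iff_compactSpace.1 hK.isCompact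
  have : Nonempty K := hne.to_subtype
  have hcover : ⋃ n, ((↑) : K → X) ⁻¹' F n = Set.univ :=
    Set.eq_univ_of_forall fun z => by simpa using hKF z.2
  obtain ⟨n, w, hw⟩ :=
    nonempty_interior_of_iUnion_of_closed (fun n => (hF n).preimage continuous_subtype_val) hcover
  obtain ⟨V, hV, hVint⟩ := isOpen_induced_iff.1 (isOpen_interior (s := ((↑) : K → X) ⁻¹' F n))
  refine ⟨n, V, hV, ⟨w, w.2, ?_⟩, fun z ⟨hzK, hzV⟩ => ?_⟩
  · exact (hVint ▸ hw : w ∈ ((↑) : K → X) ⁻¹' V)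
  · have : (⟨z, hzK⟩ : K) ∈ interior (((↑) : K → X) ⁻¹' F n) := hVint ▸ hzV
    exact interior_subset (s := ((↑) : K → X) ⁻¹' F n) this

theorem Perfect.exists_perfect_subset_inter [CompactSpace X] [T2Space X]
    [TotallyDisconnectedSpace X] {U : Set X} {z : X} (hC : Perfect C) (hzC : z ∈ C)
    (hU : IsOpen U) (hzU : z ∈ U) : ∃ D ⊆ C ∩ U, Perfect D ∧ z ∈ D := by
  obtain ⟨W, hW, hzW, hWU⟩ := compact_exists_isClopen_in_isOpen hU hzU
  exact ⟨C ∩ W, Set.inter_subset_inter_right C hWU, hC.inter_isClopen hW, hzC, hzW⟩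

theorem Perfect.exists_separated_perfect_subsets {C : Set (ℕ → Bool)} (hC : Perfect C)
    (hne : C.Nonempty) : ∃ l, ∃ A ⊆ C, ∃ B ⊆ C, Perfect A ∧ A.Nonempty ∧ Perfect B ∧
      B.Nonempty ∧ ∀ z ∈ A, ∀ w ∈ B, z l ≠ w l := by
  obtain ⟨C₀, C₁, ⟨-, ⟨a, ha⟩, hC₀⟩, ⟨-, ⟨b, hb⟩, hC₁⟩, hdisj⟩ := hC.splitting hne
  obtain ⟨l, hl⟩ := Function.ne_iff.1 (hdisj.ne_of_mem ha hb)
  have hclopen (c : Bool) : IsClopen {z : ℕ → Bool | z l = c} :=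
    (isClopen_discrete {c}).preimage (continuous_apply l)
  refine ⟨l, C ∩ {z | z l = a l}, Set.inter_subset_left, C ∩ {z | z l = b l},
    Set.inter_subset_left, hC.inter_isClopen (hclopen _), ⟨a, hC₀ ha, rfl⟩,
    hC.inter_isClopen (hclopen _), ⟨b, hC₁ hb, rfl⟩, fun z hz w hw => ?_⟩
  rw [hz.2, hw.2]
  exact hl

end Topology

theorem Ordinal.exists_forall_lt_omega_one {Y : Type} [Countable Y] {p : Ordinal.{0} → Y → Prop}
    (hp : ∀ ⦃α β⦄, β ≤ α → ∀ ⦃y⦄, p α y → p β y) (h : ∀ α < ω₁, ∃ y, p α y) :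
    ∃ y, ∀ α < ω₁, p α y := by
  by_contra! hY
  choose γ hγ hpγ using hY
  obtain ⟨y, hy⟩ := h _ (iSup_lt_omega_one hγ)
  exact hpγ y (hp (Ordinal.le_iSup γ y) hy)

theorem exists_selection_split {ι α : Type*} {s : Set ι} {S : ι → Set α}
    (hS : ∀ i ∈ s, (S i).Nonempty) {ρ : ι} {a b : α} (ha : a ∈ S ρ) (hb : b ∈ S ρ) :
    ∃ p : Fin 2 → ι → α, (∀ k, ∀ i ∈ s, p k i ∈ S i) ∧ (∀ i, i ≠ ρ → p 0 i = p 1 i) ∧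
      p 0 ρ = a ∧ p 1 ρ = b := by
  classical
  have : Nonempty α := ⟨a⟩
  refine ⟨fun k i => if i = ρ then (if k = 0 then a else b) else Classical.epsilon (· ∈ S i),
    fun k i hi => ?_, fun i hi => by simp [hi], by simp, by simp⟩
  by_cases hiρ : i = ρ
  · subst hiρ
    fin_cases k <;> simpa
  · simpa [hiρ] using Classical.epsilon_spec (hS i hi)

namespace Sh522

theorem Tree2.take_mem (T : Tree2) {m n : ℕ} (h : m ≤ n) {σ τ : Fin n → Bool}
    (hστ : (σ, τ) ∈ T.mem n) : (Fin.take m h σ, Fin.take m h τ) ∈ T.mem m :=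
  T.closed n (σ, τ) hστ m h

def res (n : ℕ) (z : ℕ → Bool) : Fin n → Bool := fun i => z i

@[simp]
theorem res_apply (n : ℕ) (z : ℕ → Bool) (i : Fin n) : res n z i = z i := rfl

@[simp]
theorem take_res {m n : ℕ} (h : m ≤ n) (z : ℕ → Bool) : Fin.take m h (res n z) = res m z := rfl

theorem mem_lim2 {T : Tree2} {z w : ℕ → Bool} :
    (z, w) ∈ lim2 T ↔ ∀ n, (res n z, res n w) ∈ T.mem n := Iff.rfl

theorem res_surjective (n : ℕ) : Function.Surjective (res n) :=
  fun σ => ⟨fun i => if h : i < n then σ ⟨i, h⟩ else false, funext fun i => dif_pos i.2⟩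

theorem continuous_res (n : ℕ) : Continuous (res n) :=
  continuous_pi fun i => continuous_apply (i : ℕ)

theorem isClopen_preimage_res (n : ℕ) (s : Set (Fin n → Bool)) : IsClopen (res n ⁻¹' s) :=
  (isClopen_discrete s).preimage (continuous_res n)

theorem exists_res_preimage_subset {z : ℕ → Bool} {U : Set (ℕ → Bool)} (hU : U ∈ 𝓝 z) :
    ∃ N, res N ⁻¹' {res N z} ⊆ U := by
  obtain ⟨_, ⟨x, N, rfl⟩, hz, hsub⟩ :=
    (PiNat.isTopologicalBasis_cylinders fun _ => Bool).mem_nhds_iff.1 hU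
  refine ⟨N, fun w hw => hsub ?_⟩
  rw [← PiNat.mem_cylinder_iff_eq.1 hz, PiNat.mem_cylinder_iff]
  exact fun i hi => congrFun hw ⟨i, hi⟩

theorem mem_lim2_of_frequently {T : Tree2} {z w : ℕ → Bool}
    (h : ∃ᶠ n in atTop, (res n z, res n w) ∈ T.mem n) : (z, w) ∈ lim2 T := fun n => by
  obtain ⟨m, hnm, hm⟩ := frequently_atTop.1 h n
  exact T.take_mem hnm hm

theorem isClosed_lim2 (T : Tree2) : IsClosed (lim2 T) := by
  simp only [lim2, Set.ofPred_forall]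
  exact isClosed_iInter fun n => (isClosed_discrete _).preimage
    (((continuous_res n).comp continuous_fst).prodMk ((continuous_res n).comp continuous_snd))

structure IsSplit (x : PfAp) (ρ : Fin x.1 → Bool) (y : PfAp) (le : x.1 ≤ y.1)
    (h : Fin 2 → (Fin x.1 → Bool) → Fin y.1 → Bool) : Prop where
  take_eq : ∀ i, ∀ η ∈ x.2.1, Fin.take x.1 le (h i η) = η
  eq_iff_ne : ∀ η ∈ x.2.1, h 0 η = h 1 η ↔ η ≠ ρ
  eq_union : y.2.1 = h 0 '' x.2.1 ∪ h 1 '' x.2.1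
  colour_eq : ∀ i, ∀ η ∈ x.2.1, ∀ ν ∈ x.2.1, y.2.2 (h i η) (h i ν) = x.2.2 η ν

theorem degsqStep_iff {P : PfAp → Prop} {x : PfAp} :
    degsqStep P x ↔ x.2.1.Nonempty ∧
      ∀ ρ ∈ x.2.1, ∃ y le h, IsSplit x ρ y le h ∧ P y := by
  refine and_congr_right fun _ => forall₂_congr fun ρ _ => ⟨?_, ?_⟩
  · rintro ⟨m, le, u, g, h, htake, hiff, hunion, hcol, hP⟩
    exact ⟨⟨m, u, g⟩, le, h, ⟨fun i η hη => funext (htake i η hη), hiff, hunion, hcol⟩, hP⟩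
  · rintro ⟨⟨m, u, g⟩, le, h, ⟨htake, hiff, hunion, hcol⟩, hP⟩
    exact ⟨m, le, u, g, h, fun i η hη => congrFun (htake i η hη), hiff, hunion, hcol, hP⟩

theorem degsqStep_mono {P Q : PfAp → Prop} (hPQ : ∀ y, P y → Q y) {x : PfAp}
    (hx : degsqStep P x) : degsqStep Q x := by
  rw [degsqStep_iff] at hx ⊢
  exact ⟨hx.1, fun ρ hρ => (hx.2 ρ hρ).imp fun y ⟨le, h, hs, hP⟩ => ⟨le, h, hs, hPQ y hP⟩⟩

theorem IsSplit.mem {x y : PfAp} {ρ le h} (hs : IsSplit x ρ y le h) (i : Fin 2)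
    {η} (hη : η ∈ x.2.1) : h i η ∈ y.2.1 := by
  rw [hs.eq_union]
  fin_cases i
  exacts [.inl ⟨η, hη, rfl⟩, .inr ⟨η, hη, rfl⟩]

theorem degsqBase_of_degsqStep {T : ℕ → Tree2} {x : PfAp} (hx : degsqStep (degsqBase T) x) :
    degsqBase T x := by
  rw [degsqStep_iff] at hx
  refine ⟨hx.1, fun η hη ν hν => ?_⟩
  obtain ⟨y, le, h, hs, hy⟩ := hx.2 η hη
  have := (T _).take_mem le (hy.2 _ (hs.mem 0 hη) _ (hs.mem 0 hν))
  rwa [hs.take_eq 0 η hη, hs.take_eq 0 ν hν, hs.colour_eq 0 η hη ν hν] at this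

section Degree

variable (T : ℕ → Tree2)

theorem degsqGe_zero : degsqGe T 0 = degsqStep (degsqBase T) :=
  limitRecOn_zero _ _ _

theorem degsqGe_add_one (α : Ordinal.{0}) : degsqGe T (α + 1) = degsqStep (degsqGe T α) :=
  limitRecOn_add_one _ _ _ _

theorem degsqGe_iff_of_isSuccLimit {α : Ordinal.{0}} (hα : Order.IsSuccLimit α) (x : PfAp) :
    degsqGe T α x ↔ ∀ β < α, degsqGe T β x := by
  unfold degsqGe
  rw [limitRecOn_limit _ _ _ _ hα]

theorem degsqGe_of_add_one {α : Ordinal.{0}} {x : PfAp} (hx : degsqGe T (α + 1) x) :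
    degsqGe T α x := by
  induction α using Ordinal.limitRecOn generalizing x with
  | zero =>
    rw [degsqGe_add_one, degsqGe_zero] at hx
    rw [degsqGe_zero]
    exact degsqStep_mono (fun _ => degsqBase_of_degsqStep) hx
  | add_one β ih =>
    rw [degsqGe_add_one] at hx ⊢
    exact degsqStep_mono (fun _ => ih) hx
  | limit β hβ ih =>
    rw [degsqGe_add_one] at hx
    refine (degsqGe_iff_of_isSuccLimit T hβ x).2 fun γ hγ => ih γ hγ ?_
    rw [degsqGe_add_one]
    exact degsqStep_mono (fun y hy => (degsqGe_iff_of_isSuccLimit T hβ y).1 hy γ hγ) hx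

theorem degsqGe_antitone {α β : Ordinal.{0}} (hβα : β ≤ α) {x : PfAp} (hx : degsqGe T α x) :
    degsqGe T β x := by
  induction α using Ordinal.limitRecOn generalizing x with
  | zero => rwa [nonpos_iff_eq_zero.1 hβα]
  | add_one γ ih =>
    rcases hβα.lt_or_eq with hlt | rfl
    · exact ih (Order.lt_add_one_iff.1 hlt) (degsqGe_of_add_one T hx)
    · exact hx
  | limit γ hγ ih =>
    rcases hβα.lt_or_eq with hlt | rfl
    · exact (degsqGe_iff_of_isSuccLimit T hγ x).1 hx β hlt
    · exact hx

end Degree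

variable {T : ℕ → Tree2}

instance : Countable PfAp :=
  inferInstanceAs (Countable (Σ n : ℕ, Set (Fin n → Bool) × ((Fin n → Bool) → (Fin n → Bool) → ℕ)))

theorem degsqStep_forall_lt_omega_one {P : Ordinal.{0} → PfAp → Prop}
    (hP : ∀ ⦃α β⦄, β ≤ α → ∀ ⦃y⦄, P α y → P β y) {x : PfAp}
    (hx : ∀ α < ω₁, degsqStep (P α) x) : degsqStep (fun y => ∀ α < ω₁, P α y) x := by
  simp only [degsqStep_iff] at hx ⊢
  refine ⟨(hx 0 (omega_pos 1)).1, fun ρ hρ => ?_⟩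
  obtain ⟨⟨y, h⟩, hy⟩ := Ordinal.exists_forall_lt_omega_one
    (Y := Σ y : PfAp, Fin 2 → (Fin x.1 → Bool) → Fin y.1 → Bool)
    (p := fun α w => ∃ le, IsSplit x ρ w.1 le w.2 ∧ P α w.1)
    (fun _ _ hβα _ ⟨le, hs, hw⟩ => ⟨le, hs, hP hβα hw⟩)
    fun α hα => by
      obtain ⟨y, le, h, hs, hy⟩ := (hx α hα).2 ρ hρ
      exact ⟨⟨y, h⟩, le, hs, hy⟩
  obtain ⟨le, hs, -⟩ := hy 0 (omega_pos 1)
  exact ⟨y, le, h, hs, fun α hα => (hy α hα).choose_spec.2⟩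

def IsSplittingFamily (T : ℕ → Tree2) (S : PfAp → Prop) : Prop :=
  ∀ x, S x → degsqBase T x ∧ degsqStep S x

theorem IsSplittingFamily.degsqGe {S : PfAp → Prop} (hS : IsSplittingFamily T S) {x : PfAp}
    (hx : S x) (α : Ordinal.{0}) : degsqGe T α x := by
  induction α using Ordinal.limitRecOn generalizing x with
  | zero =>
    rw [degsqGe_zero]
    exact degsqStep_mono (fun y hy => (hS y hy).1) (hS x hx).2
  | add_one β ih =>
    rw [degsqGe_add_one]
    exact degsqStep_mono (fun y hy => ih hy) (hS x hx).2
  | limit β hβ ih => exact (degsqGe_iff_of_isSuccLimit T hβ x).2 fun γ hγ => ih γ hγ hx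

theorem isSplittingFamily_degsqGe_omega_one (T : ℕ → Tree2) :
    IsSplittingFamily T (fun x => ∀ α < ω₁, degsqGe T α x) := by
  intro x hx
  refine ⟨degsqBase_of_degsqStep (degsqGe_zero T ▸ hx 0 (omega_pos 1)), ?_⟩
  refine degsqStep_forall_lt_omega_one (P := degsqGe T) (fun _ _ h _ => degsqGe_antitone T h)
    fun α hα => ?_
  rw [← degsqGe_add_one]
  exact hx _ ((isSuccLimit_omega 1).add_one_lt hα)

theorem exists_forall_degsqGe_of_forall_lt_omega_one (h : ∀ α < ω₁, ∃ x, degsqGe T α x) :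
    ∃ x, ∀ α < ω₁, degsqGe T α x :=
  Ordinal.exists_forall_lt_omega_one (fun _ _ hβα _ => degsqGe_antitone T hβα) h

theorem lt_of_nontrivial_inter_preimage_take {m n : ℕ} {h : m ≤ n} {s : Set (Fin n → Bool)}
    {σ : Fin m → Bool} (hs : (s ∩ Fin.take m h ⁻¹' {σ}).Nontrivial) : m < n := by
  obtain ⟨τ, ⟨-, hτ⟩, τ', ⟨-, hτ'⟩, hne⟩ := hs
  refine lt_of_not_ge fun hnm => hne (funext fun i => ?_)
  simpa using congrFun (hτ.trans hτ'.symm) (Fin.castLE hnm i)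

structure Refines (x y : PfAp) : Prop where
  le : x.1 ≤ y.1
  mapsTo : Set.MapsTo (Fin.take x.1 le) y.2.1 x.2.1
  surjOn : Set.SurjOn (Fin.take x.1 le) y.2.1 x.2.1
  -- only pairs of distinct nodes with a common restriction may be recoloured
  colour_eq : ∀ τ ∈ y.2.1, ∀ τ' ∈ y.2.1,
    (Fin.take x.1 le τ ≠ Fin.take x.1 le τ' ∨ τ = τ') →
      y.2.2 τ τ' = x.2.2 (Fin.take x.1 le τ) (Fin.take x.1 le τ')

structure SplitRefines (x y : PfAp) : Prop extends Refines x y where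
  nontrivial : ∀ σ ∈ x.2.1, (y.2.1 ∩ Fin.take x.1 le ⁻¹' {σ}).Nontrivial

theorem Refines.refl (x : PfAp) : Refines x x where
  le := le_rfl
  mapsTo τ hτ := by rwa [Fin.take_eq_self]
  surjOn σ hσ := ⟨σ, hσ, Fin.take_eq_self σ⟩
  colour_eq τ _ τ' _ _ := by simp only [Fin.take_eq_self]

theorem Refines.trans {x y z : PfAp} (hxy : Refines x y) (hyz : Refines y z) : Refines x z where
  le := hxy.le.trans hyz.le
  mapsTo := hxy.mapsTo.comp hyz.mapsTo
  surjOn := hxy.surjOn.comp hyz.surjOn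
  colour_eq τ hτ τ' hτ' h := by
    have hy : Fin.take y.1 hyz.le τ ≠ Fin.take y.1 hyz.le τ' ∨ τ = τ' :=
      h.imp_left fun hne he => hne (by rw [← Fin.take_take hxy.le hyz.le, he, Fin.take_take])
    rw [hyz.colour_eq τ hτ τ' hτ' hy, hxy.colour_eq _ (hyz.mapsTo hτ) _ (hyz.mapsTo hτ')
      (h.imp_right (congrArg _))]
    rfl

theorem Refines.nontrivial_inter_preimage_take {y z : PfAp} (hyz : Refines y z) {n : ℕ}
    {hy : n ≤ y.1} {hz : n ≤ z.1} {σ : Fin n → Bool}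
    (h : (y.2.1 ∩ Fin.take n hy ⁻¹' {σ}).Nontrivial) :
    (z.2.1 ∩ Fin.take n hz ⁻¹' {σ}).Nontrivial := by
  obtain ⟨τ, ⟨hτ, hτσ⟩, τ', ⟨hτ', hτ'σ⟩, hne⟩ := h
  obtain ⟨ζ, hζ, rfl⟩ := hyz.surjOn hτ
  obtain ⟨ζ', hζ', rfl⟩ := hyz.surjOn hτ'
  exact ⟨ζ, ⟨hζ, hτσ⟩, ζ', ⟨hζ', hτ'σ⟩, fun he => hne (congrArg _ he)⟩

theorem IsSplit.refines {x y : PfAp} {ρ le h} (hs : IsSplit x ρ y le h) : Refines x y where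
  le := le
  mapsTo τ hτ := by
    rw [hs.eq_union] at hτ
    obtain ⟨η, hη, rfl⟩ | ⟨η, hη, rfl⟩ := hτ
    exacts [(hs.take_eq 0 η hη).symm ▸ hη, (hs.take_eq 1 η hη).symm ▸ hη]
  surjOn η hη := ⟨h 0 η, hs.mem 0 hη, hs.take_eq 0 η hη⟩
  colour_eq τ hτ τ' hτ' hττ' := by
    rw [hs.eq_union] at hτ hτ'
    obtain ⟨i, η, hη, rfl⟩ : ∃ i η, η ∈ x.2.1 ∧ h i η = τ := by
      obtain ⟨η, hη, rfl⟩ | ⟨η, hη, rfl⟩ := hτ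
      exacts [⟨0, η, hη, rfl⟩, ⟨1, η, hη, rfl⟩]
    obtain ⟨j, ν, hν, rfl⟩ : ∃ j ν, ν ∈ x.2.1 ∧ h j ν = τ' := by
      obtain ⟨ν, hν, rfl⟩ | ⟨ν, hν, rfl⟩ := hτ'
      exacts [⟨0, ν, hν, rfl⟩, ⟨1, ν, hν, rfl⟩]
    rw [hs.take_eq i η hη, hs.take_eq j ν hν] at hττ' ⊢
    have hcopy : ∀ k l, ∀ μ ∈ x.2.1, μ ≠ ρ → h k μ = h l μ := fun k l μ hμ hμρ => by
      have := (hs.eq_iff_ne μ hμ).2 hμρ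
      fin_cases k <;> fin_cases l <;> simp [this]
    rcases hττ' with hne | heq
    · by_cases hνρ : ν = ρ
      · rw [hcopy i j η hη (hνρ ▸ hne), hs.colour_eq j η hη ν hν]
      · rw [hcopy j i ν hν hνρ, hs.colour_eq i η hη ν hν]
    · have hην : η = ν := by rw [← hs.take_eq i η hη, heq, hs.take_eq j ν hν]
      subst hην
      rw [← heq, hs.colour_eq i η hη η hη]

theorem IsSplit.nontrivial {x y : PfAp} {ρ le h} (hs : IsSplit x ρ y le h) (hρ : ρ ∈ x.2.1) :
    (y.2.1 ∩ Fin.take x.1 le ⁻¹' {ρ}).Nontrivial :=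
  ⟨h 0 ρ, ⟨hs.mem 0 hρ, hs.take_eq 0 ρ hρ⟩, h 1 ρ, ⟨hs.mem 1 hρ, hs.take_eq 1 ρ hρ⟩,
    fun he => (hs.eq_iff_ne ρ hρ).1 he rfl⟩

def splitConfig (x : PfAp) (ρ : Fin x.1 → Bool) {m : ℕ} (le : x.1 ≤ m)
    (h : Fin 2 → (Fin x.1 → Bool) → Fin m → Bool) (c₁ c₂ : ℕ) : PfAp :=
  ⟨m, h 0 '' x.2.1 ∪ h 1 '' x.2.1, fun σ τ =>
    if σ = h 0 ρ ∧ τ = h 1 ρ then c₁ else if σ = h 1 ρ ∧ τ = h 0 ρ then c₂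
    else x.2.2 (Fin.take x.1 le σ) (Fin.take x.1 le τ)⟩

theorem isSplit_splitConfig {x : PfAp} {ρ : Fin x.1 → Bool} {m : ℕ} {le : x.1 ≤ m}
    {h : Fin 2 → (Fin x.1 → Bool) → Fin m → Bool} (c₁ c₂ : ℕ) (hρ : ρ ∈ x.2.1)
    (htake : ∀ i, ∀ η ∈ x.2.1, Fin.take x.1 le (h i η) = η)
    (hcopy : ∀ η, η ≠ ρ → h 0 η = h 1 η) (hsplit : h 0 ρ ≠ h 1 ρ) :
    IsSplit x ρ (splitConfig x ρ le h c₁ c₂) le h where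
  take_eq := htake
  eq_iff_ne η _ := ⟨fun he hηρ => hsplit (hηρ ▸ he), hcopy η⟩
  eq_union := rfl
  colour_eq i η hη ν hν := by
    have hρ_of {μ} (hμ : μ ∈ x.2.1) j (he : h i μ = h j ρ) : μ = ρ := by
      rw [← htake i μ hμ, he, htake j ρ hρ]
    have h01 : ¬(h i η = h 0 ρ ∧ h i ν = h 1 ρ) := fun ⟨he, he'⟩ => by
      obtain rfl := hρ_of hη 0 he
      obtain rfl := hρ_of hν 1 he'
      exact hsplit (he.symm.trans he')
    have h10 : ¬(h i η = h 1 ρ ∧ h i ν = h 0 ρ) := fun ⟨he, he'⟩ => by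
      obtain rfl := hρ_of hη 1 he
      obtain rfl := hρ_of hν 0 he'
      exact hsplit (he'.symm.trans he)
    simp only [splitConfig, if_neg h01, if_neg h10, htake i η hη, htake i ν hν]

theorem IsSplit.eq_or_eq_of_take_eq {x y : PfAp} {ρ le h} (hs : IsSplit x ρ y le h)
    {σ τ : Fin y.1 → Bool} (hσ : σ ∈ y.2.1) (hτ : τ ∈ y.2.1) (hστ : σ ≠ τ)
    (htake : Fin.take x.1 le σ = Fin.take x.1 le τ) :
    σ = h 0 ρ ∧ τ = h 1 ρ ∨ σ = h 1 ρ ∧ τ = h 0 ρ := by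
  rw [hs.eq_union] at hσ hτ
  obtain ⟨η, hη, rfl⟩ | ⟨η, hη, rfl⟩ := hσ <;> obtain ⟨ν, hν, rfl⟩ | ⟨ν, hν, rfl⟩ := hτ <;>
  · rw [hs.take_eq _ η hη, hs.take_eq _ ν hν] at htake
    subst htake
    have hηρ : η = ρ := by_contra fun hηρ => hστ (by simp [(hs.eq_iff_ne η hη).2 hηρ])
    subst hηρ
    simp_all

theorem IsSplittingFamily.exists_splitRefines {S : PfAp → Prop}
    (hS : IsSplittingFamily T S) {x : PfAp} (hx : S x) : ∃ y, S y ∧ SplitRefines x y := by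
  suffices key : ∀ s : Finset (Fin x.1 → Bool), ↑s ⊆ x.2.1 → ∃ y, S y ∧ ∃ hxy : Refines x y,
      ∀ σ ∈ s, (y.2.1 ∩ Fin.take x.1 hxy.le ⁻¹' {σ}).Nontrivial by
    obtain ⟨y, hy, hxy, hsplit⟩ := key (Set.toFinite x.2.1).toFinset (by simp)
    exact ⟨y, hy, hxy, fun σ hσ => hsplit σ (by simpa using hσ)⟩
  intro s
  induction s using Finset.induction_on with
  | empty => exact fun _ => ⟨x, hx, Refines.refl x, by simp⟩
  | insert σ s _ ih =>
    intro hs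
    obtain ⟨y, hy, hxy, hsplit⟩ := ih ((Finset.coe_subset.2 (Finset.subset_insert σ s)).trans hs)
    obtain ⟨τ, hτ, hτσ⟩ := hxy.surjOn (hs (Finset.mem_insert_self σ s))
    obtain ⟨z, le, h, hsplit_τ, hz⟩ := (degsqStep_iff.1 (hS y hy).2).2 τ hτ
    have hyz := hsplit_τ.refines
    refine ⟨z, hz, hxy.trans hyz, fun σ' hσ' => ?_⟩
    rcases Finset.mem_insert.1 hσ' with rfl | hσ's
    · refine (hsplit_τ.nontrivial hτ).mono fun ζ ⟨hζ, hζτ⟩ => ⟨hζ, ?_⟩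
      simp only [Set.mem_preimage, Set.mem_singleton_iff] at hζτ ⊢
      rw [← Fin.take_take hxy.le le, hζτ, hτσ]
    · exact hyz.nontrivial_inter_preimage_take (hsplit σ' hσ's)

def branches (xs : ℕ → PfAp) : Set (ℕ → Bool) := {z | ∀ k, res (xs k).1 z ∈ (xs k).2.1}

section Fusion

variable {xs : ℕ → PfAp}

theorem refines_of_le (hxs : ∀ k, Refines (xs k) (xs (k + 1))) {k l : ℕ} (hkl : k ≤ l) :
    Refines (xs k) (xs l) := by
  induction l, hkl using Nat.le_induction with
  | base => exact Refines.refl _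
  | succ l _ ih => exact ih.trans (hxs l)

theorem isClosed_branches (xs : ℕ → PfAp) : IsClosed (branches xs) := by
  simp only [branches, Set.ofPred_forall]
  exact isClosed_iInter fun k => (isClopen_preimage_res _ _).isClosed

theorem exists_mem_branches_res_eq (hxs : ∀ k, Refines (xs k) (xs (k + 1))) {k : ℕ}
    {σ : Fin (xs k).1 → Bool} (hσ : σ ∈ (xs k).2.1) : ∃ z ∈ branches xs, res (xs k).1 z = σ := by
  set t : ℕ → Set (ℕ → Bool) := fun j =>
    res (xs k).1 ⁻¹' {σ} ∩ res (xs (k + j)).1 ⁻¹' (xs (k + j)).2.1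
  have hclosed j : IsClosed (t j) :=
    (isClopen_preimage_res _ _).isClosed.inter (isClopen_preimage_res _ _).isClosed
  have hanti j : t (j + 1) ⊆ t j := fun z ⟨hzσ, hz⟩ => ⟨hzσ, (hxs (k + j)).mapsTo hz⟩
  have hne j : (t j).Nonempty := by
    have hk := refines_of_le hxs (Nat.le_add_right k j)
    obtain ⟨τ, hτ, hτσ⟩ := hk.surjOn hσ
    obtain ⟨z, rfl⟩ := res_surjective _ τ
    exact ⟨z, hτσ, hτ⟩
  obtain ⟨z, hz⟩ := IsCompact.nonempty_iInter_of_sequence_nonempty_isCompact_isClosed t hanti hne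
    (hclosed 0).isCompact hclosed
  rw [Set.mem_iInter] at hz
  exact ⟨z, fun l => (refines_of_le hxs (Nat.le_add_left l k)).mapsTo (hz l).2, (hz 0).1⟩

theorem strictMono_fst (hne : ∀ k, (xs k).2.1.Nonempty)
    (hxs : ∀ k, SplitRefines (xs k) (xs (k + 1))) : StrictMono fun k => (xs k).1 :=
  strictMono_nat_of_lt_succ fun k =>
    have ⟨_, hσ⟩ := hne k
    lt_of_nontrivial_inter_preimage_take ((hxs k).nontrivial _ hσ)

theorem perfect_branches (hne : ∀ k, (xs k).2.1.Nonempty)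
    (hxs : ∀ k, SplitRefines (xs k) (xs (k + 1))) :
    Perfect (branches xs) ∧ (branches xs).Nonempty := by
  have hrefines k := (hxs k).toRefines
  refine ⟨⟨isClosed_branches xs, fun z hz => accPt_iff_nhds.2 fun U hU => ?_⟩, ?_⟩
  · obtain ⟨N, hN⟩ := exists_res_preimage_subset hU
    obtain ⟨τ, ⟨hτ, hτz⟩, hτne⟩ :=
      ((hxs N).nontrivial _ (hz N)).exists_ne (res (xs (N + 1)).1 z)
    obtain ⟨w, hw, rfl⟩ := exists_mem_branches_res_eq hrefines hτ
    refine ⟨w, ⟨hN ?_, hw⟩, fun hwz => hτne (hwz ▸ rfl)⟩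
    have hNk : N ≤ (xs N).1 := (strictMono_fst hne hxs).le_apply
    have : res (xs N).1 w = res (xs N).1 z := hτz
    simpa using congrArg (Fin.take N hNk) this
  · obtain ⟨σ, hσ⟩ := hne 0
    obtain ⟨z, hz, -⟩ := exists_mem_branches_res_eq hrefines hσ
    exact ⟨z, hz⟩

theorem branches_prod_subset (hbase : ∀ k, degsqBase T (xs k))
    (hmono : StrictMono fun k => (xs k).1) (hxs : ∀ k, Refines (xs k) (xs (k + 1))) :
    branches xs ×ˢ branches xs ⊆ ⋃ c, lim2 (T c) := by
  rintro ⟨z, w⟩ ⟨hz, hw⟩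
  -- once `z` and `w` have separated (at once if `z = w`), their colour no longer changes
  obtain ⟨k₀, hk₀⟩ : ∃ k₀, res (xs k₀).1 z ≠ res (xs k₀).1 w ∨ z = w := by
    by_cases hzw : z = w
    · exact ⟨0, .inr hzw⟩
    obtain ⟨p, hp⟩ := Function.ne_iff.1 hzw
    have hpk : p < (xs (p + 1)).1 := (Nat.lt_succ_self p).trans_le hmono.le_apply
    exact ⟨p + 1, .inl fun he => hp (congrFun he ⟨p, hpk⟩)⟩
  refine Set.mem_iUnion.2 ⟨(xs k₀).2.2 (res (xs k₀).1 z) (res (xs k₀).1 w),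
    mem_lim2_of_frequently (frequently_atTop.2 fun N => ?_)⟩
  set k := max k₀ N
  have hk := refines_of_le hxs (le_max_left k₀ N)
  have hcol := hk.colour_eq _ (hz k) _ (hw k) (hk₀.imp_right (congrArg _))
  rw [take_res, take_res] at hcol
  refine ⟨(xs k).1, (le_max_right k₀ N).trans hmono.le_apply, ?_⟩
  rw [← hcol]
  exact (hbase k).2 _ (hz k) _ (hw k)

end Fusion

theorem IsSplittingFamily.exists_perfect_prod_subset {S : PfAp → Prop}
    (hS : IsSplittingFamily T S) {x : PfAp} (hx : S x) :
    ∃ P : Set (ℕ → Bool), Perfect P ∧ P.Nonempty ∧ P ×ˢ P ⊆ ⋃ c, lim2 (T c) := by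
  have hnext y : ∃ y', S y → S y' ∧ SplitRefines y y' := by
    by_cases hy : S y
    · exact (hS.exists_splitRefines hy).imp fun _ h _ => h
    · exact ⟨y, fun h => absurd h hy⟩
  choose F hF using hnext
  set xs := fun k => F^[k] x
  have hSxs k : S (xs k) := by
    induction k with
    | zero => exact hx
    | succ k ih => simpa only [xs, Function.iterate_succ_apply'] using (hF _ ih).1
  have hxs k : SplitRefines (xs k) (xs (k + 1)) := by
    simpa only [xs, Function.iterate_succ_apply'] using (hF _ (hSxs k)).2
  have hbase k := (hS _ (hSxs k)).1
  have hne k := (hbase k).1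
  obtain ⟨hperf, hP⟩ := perfect_branches hne hxs
  exact ⟨branches xs, hperf, hP,
    branches_prod_subset hbase (strictMono_fst hne hxs) fun k => (hxs k).toRefines⟩

theorem exists_perfect_subset_forall_diag_mem_lim2 {C : Set (ℕ → Bool)} (hC : Perfect C)
    (hne : C.Nonempty) (hCT : ∀ z ∈ C, (z, z) ∈ ⋃ c, lim2 (T c)) :
    ∃ c, ∃ D ⊆ C, Perfect D ∧ D.Nonempty ∧ ∀ z ∈ D, (z, z) ∈ lim2 (T c) := by
  have hdiag : Continuous fun z : ℕ → Bool => (z, z) := continuous_id.prodMk continuous_id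
  obtain ⟨c, V, hV, ⟨z, hzC, hzV⟩, hCV⟩ := hC.closed.exists_isOpen_inter_subset hne
    (fun c => (isClosed_lim2 (T c)).preimage hdiag) fun z hz => by simpa using hCT z hz
  obtain ⟨D, hD, hDp, hzD⟩ := hC.exists_perfect_subset_inter hzC hV hzV
  exact ⟨c, D, hD.trans Set.inter_subset_left, hDp, ⟨z, hzD⟩, fun w hw => hCV (hD hw)⟩

theorem exists_perfect_prod_subset_lim2 {A B : Set (ℕ → Bool)} (hA : Perfect A)
    (hAne : A.Nonempty) (hB : Perfect B) (hBne : B.Nonempty)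
    (hABT : A ×ˢ B ⊆ ⋃ c, lim2 (T c)) :
    ∃ c, ∃ A' ⊆ A, ∃ B' ⊆ B, Perfect A' ∧ A'.Nonempty ∧ Perfect B' ∧ B'.Nonempty ∧
      A' ×ˢ B' ⊆ lim2 (T c) := by
  obtain ⟨c, V, hV, ⟨⟨a, b⟩, ⟨ha, hb⟩, habV⟩, hABV⟩ :=
    (hA.closed.prod hB.closed).exists_isOpen_inter_subset (hAne.prod hBne)
      (fun c => isClosed_lim2 (T c)) hABT
  obtain ⟨U, W, hU, hW, haU, hbW, hUW⟩ := isOpen_prod_iff.1 hV a b habV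
  obtain ⟨A', hA', hA'p, haA'⟩ := hA.exists_perfect_subset_inter ha hU haU
  obtain ⟨B', hB', hB'p, hbB'⟩ := hB.exists_perfect_subset_inter hb hW hbW
  refine ⟨c, A', hA'.trans Set.inter_subset_left, B', hB'.trans Set.inter_subset_left,
    hA'p, ⟨a, haA'⟩, hB'p, ⟨b, hbB'⟩, fun p hp => hABV ⟨⟨?_, ?_⟩, hUW ⟨?_, ?_⟩⟩⟩
  exacts [(hA' hp.1).1, (hB' hp.2).1, (hA' hp.1).2, (hB' hp.2).2]

theorem exists_separated_rectangles {C : Set (ℕ → Bool)} (hC : Perfect C)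
    (hne : C.Nonempty) (hCT : C ×ˢ C ⊆ ⋃ c, lim2 (T c)) :
    ∃ l c₁ c₂, ∃ A ⊆ C, ∃ B ⊆ C, Perfect A ∧ A.Nonempty ∧ Perfect B ∧ B.Nonempty ∧
      A ×ˢ B ⊆ lim2 (T c₁) ∧ B ×ˢ A ⊆ lim2 (T c₂) ∧ ∀ z ∈ A, ∀ w ∈ B, z l ≠ w l := by
  obtain ⟨l, A₀, hA₀, B₀, hB₀, hA₀p, hA₀ne, hB₀p, hB₀ne, hsep⟩ :=
    hC.exists_separated_perfect_subsets hne
  obtain ⟨c₁, A₁, hA₁, B₁, hB₁, hA₁p, hA₁ne, hB₁p, hB₁ne, hAB⟩ :=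
    exists_perfect_prod_subset_lim2 hA₀p hA₀ne hB₀p hB₀ne
      ((Set.prod_mono hA₀ hB₀).trans hCT)
  obtain ⟨c₂, B, hB, A, hA, hBp, hBne, hAp, hAne, hBA⟩ :=
    exists_perfect_prod_subset_lim2 hB₁p hB₁ne hA₁p hA₁ne
      ((Set.prod_mono (hB₁.trans hB₀) (hA₁.trans hA₀)).trans hCT)
  exact ⟨l, c₁, c₂, A, hA.trans (hA₁.trans hA₀), B, hB.trans (hB₁.trans hB₀), hAp, hAne, hBp,
    hBne, (Set.prod_mono hA hB).trans hAB, hBA,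
    fun z hz w hw => hsep z (hA₁ (hA hz)) w (hB₁ (hB hw))⟩

structure IsSquareWitness (T : ℕ → Tree2) (x : PfAp) (Q : (Fin x.1 → Bool) → Set (ℕ → Bool)) :
    Prop where
  perfect : ∀ η ∈ x.2.1, Perfect (Q η)
  nonempty : ∀ η ∈ x.2.1, (Q η).Nonempty
  res_eq : ∀ η ∈ x.2.1, ∀ z ∈ Q η, res x.1 z = η
  prod_self_subset : ∀ η ∈ x.2.1, Q η ×ˢ Q η ⊆ ⋃ c, lim2 (T c)
  prod_subset : ∀ η ∈ x.2.1, ∀ ν ∈ x.2.1, η ≠ ν → Q η ×ˢ Q ν ⊆ lim2 (T (x.2.2 η ν))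
  diag_mem : ∀ η ∈ x.2.1, ∀ z ∈ Q η, (z, z) ∈ lim2 (T (x.2.2 η η))

def HasSquareWitness (T : ℕ → Tree2) (x : PfAp) : Prop :=
  x.2.1.Nonempty ∧ ∃ Q, IsSquareWitness T x Q

namespace IsSquareWitness

variable {x : PfAp} {Q : (Fin x.1 → Bool) → Set (ℕ → Bool)}

theorem degsqBase (hQ : IsSquareWitness T x Q) (hne : x.2.1.Nonempty) : degsqBase T x := by
  refine ⟨hne, fun η hη ν hν => ?_⟩
  obtain ⟨z, hz, w, hw, hzw⟩ : ∃ z ∈ Q η, ∃ w ∈ Q ν, (z, w) ∈ lim2 (T (x.2.2 η ν)) := by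
    obtain ⟨z, hz⟩ := hQ.nonempty η hη
    obtain ⟨w, hw⟩ := hQ.nonempty ν hν
    by_cases hην : η = ν
    · subst hην
      exact ⟨z, hz, z, hz, hQ.diag_mem η hη z hz⟩
    · exact ⟨z, hz, w, hw, hQ.prod_subset η hη ν hν hην ⟨hz, hw⟩⟩
  have := mem_lim2.1 hzw x.1
  rwa [hQ.res_eq η hη z hz, hQ.res_eq ν hν w hw] at this

theorem mono (hQ : IsSquareWitness T x Q) {Q' : (Fin x.1 → Bool) → Set (ℕ → Bool)}
    (hQ' : ∀ η ∈ x.2.1, Q' η ⊆ Q η ∧ Perfect (Q' η) ∧ (Q' η).Nonempty) :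
    IsSquareWitness T x Q' where
  perfect η hη := (hQ' η hη).2.1
  nonempty η hη := (hQ' η hη).2.2
  res_eq η hη z hz := hQ.res_eq η hη z ((hQ' η hη).1 hz)
  prod_self_subset η hη :=
    (Set.prod_mono (hQ' η hη).1 (hQ' η hη).1).trans (hQ.prod_self_subset η hη)
  prod_subset η hη ν hν hην :=
    (Set.prod_mono (hQ' η hη).1 (hQ' ν hν).1).trans (hQ.prod_subset η hη ν hν hην)
  diag_mem η hη z hz := hQ.diag_mem η hη z ((hQ' η hη).1 hz)

theorem refine (hQ : IsSquareWitness T x Q) {y : PfAp} (hxy : Refines x y)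
    (hne : ∀ σ ∈ y.2.1, (Q (Fin.take x.1 hxy.le σ) ∩ res y.1 ⁻¹' {σ}).Nonempty)
    (hsplit : ∀ σ ∈ y.2.1, ∀ τ ∈ y.2.1, σ ≠ τ → Fin.take x.1 hxy.le σ = Fin.take x.1 hxy.le τ →
      (Q (Fin.take x.1 hxy.le σ) ∩ res y.1 ⁻¹' {σ}) ×ˢ (Q (Fin.take x.1 hxy.le τ) ∩ res y.1 ⁻¹' {τ})
        ⊆ lim2 (T (y.2.2 σ τ))) :
    IsSquareWitness T y fun σ => Q (Fin.take x.1 hxy.le σ) ∩ res y.1 ⁻¹' {σ} where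
  perfect σ hσ := (hQ.perfect _ (hxy.mapsTo hσ)).inter_isClopen (isClopen_preimage_res _ _)
  nonempty := hne
  res_eq σ _ z hz := hz.2
  prod_self_subset σ hσ :=
    (Set.prod_mono Set.inter_subset_left Set.inter_subset_left).trans
      (hQ.prod_self_subset _ (hxy.mapsTo hσ))
  prod_subset σ hσ τ hτ hστ := by
    by_cases htake : Fin.take x.1 hxy.le σ = Fin.take x.1 hxy.le τ
    · exact hsplit σ hσ τ hτ hστ htake
    · rw [hxy.colour_eq σ hσ τ hτ (.inl htake)]
      exact (Set.prod_mono Set.inter_subset_left Set.inter_subset_left).trans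
        (hQ.prod_subset _ (hxy.mapsTo hσ) _ (hxy.mapsTo hτ) htake)
  diag_mem σ hσ z hz := by
    rw [hxy.colour_eq σ hσ σ hσ (.inr rfl)]
    exact hQ.diag_mem _ (hxy.mapsTo hσ) z hz.1

end IsSquareWitness

theorem union_inter_preimage_res_subset_left {A B : Set (ℕ → Bool)} {l m : ℕ} (hlm : l < m)
    (hsep : ∀ z ∈ A, ∀ w ∈ B, z l ≠ w l) {a : ℕ → Bool} (ha : a ∈ A) :
    (A ∪ B) ∩ res m ⁻¹' {res m a} ⊆ A := by
  rintro z ⟨hz | hz, hza⟩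
  · exact hz
  · exact absurd (by simpa using congrFun hza ⟨l, hlm⟩) (hsep a ha z hz).symm

theorem IsSquareWitness.update {x : PfAp} {Q : (Fin x.1 → Bool) → Set (ℕ → Bool)}
    (hQ : IsSquareWitness T x Q) (ρ : Fin x.1 → Bool) {C : Set (ℕ → Bool)} (hCQ : C ⊆ Q ρ)
    (hC : Perfect C) (hCne : C.Nonempty) : IsSquareWitness T x (Function.update Q ρ C) :=
  hQ.mono fun η hη => by
    by_cases hηρ : η = ρ
    · subst hηρ
      rw [Function.update_self]
      exact ⟨hCQ, hC, hCne⟩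
    · rw [Function.update_of_ne hηρ]
      exact ⟨subset_rfl, hQ.perfect η hη, hQ.nonempty η hη⟩

theorem IsSquareWitness.exists_isSplit {x : PfAp} {Q : (Fin x.1 → Bool) → Set (ℕ → Bool)}
    (hQ : IsSquareWitness T x Q) {ρ : Fin x.1 → Bool} (hρ : ρ ∈ x.2.1) :
    ∃ y le h, IsSplit x ρ y le h ∧ HasSquareWitness T y := by
  classical
  obtain ⟨l, c₁, c₂, A, hAQ, B, hBQ, hA, ⟨a, ha⟩, hB, ⟨b, hb⟩, hAB, hBA, hsep⟩ :=
    exists_separated_rectangles (hQ.perfect ρ hρ) (hQ.nonempty ρ hρ) (hQ.prod_self_subset ρ hρ)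
  set Q₂ := Function.update Q ρ (A ∪ B)
  have hQ₂ := hQ.update ρ (Set.union_subset hAQ hBQ) (hA.union hB) ⟨a, .inl ha⟩
  obtain ⟨p, hp, hpcopy, hp0, hp1⟩ := exists_selection_split hQ₂.nonempty
    (show a ∈ Q₂ ρ by simp [Q₂, ha]) (show b ∈ Q₂ ρ by simp [Q₂, hb])
  -- `m` is large enough for the two copies of `ρ`, read off `a` and `b`, to differ at `l`
  set m := max x.1 (l + 1)
  have hlm : l < m := by omega
  have le : x.1 ≤ m := le_max_left _ _
  set h : Fin 2 → (Fin x.1 → Bool) → Fin m → Bool := fun i η => res m (p i η)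
  have htake i η (hη : η ∈ x.2.1) : Fin.take x.1 le (h i η) = η := hQ₂.res_eq η hη _ (hp i η hη)
  have h0 : h 0 ρ = res m a := by simp [h, hp0]
  have h1 : h 1 ρ = res m b := by simp [h, hp1]
  have hsplit : h 0 ρ ≠ h 1 ρ := fun he =>
    hsep a ha b hb (by simpa [h0, h1] using congrFun he ⟨l, hlm⟩)
  have hs := isSplit_splitConfig c₁ c₂ hρ htake (fun η hηρ => by simp [h, hpcopy η hηρ]) hsplit
  have hQ₂ρ : Q₂ ρ = A ∪ B := Function.update_self ..
  refine ⟨_, le, h, hs, ⟨h 0 ρ, Or.inl ⟨ρ, hρ, rfl⟩⟩, _, hQ₂.refine hs.refines ?_ ?_⟩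
  · rintro σ (⟨η, hη, rfl⟩ | ⟨η, hη, rfl⟩)
    exacts [⟨p 0 η, (htake 0 η hη).symm ▸ hp 0 η hη, rfl⟩,
      ⟨p 1 η, (htake 1 η hη).symm ▸ hp 1 η hη, rfl⟩]
  · have hA' : Q₂ (Fin.take x.1 le (h 0 ρ)) ∩ res m ⁻¹' {h 0 ρ} ⊆ A := by
      rw [htake 0 ρ hρ, hQ₂ρ, h0]
      exact union_inter_preimage_res_subset_left hlm hsep ha
    have hB' : Q₂ (Fin.take x.1 le (h 1 ρ)) ∩ res m ⁻¹' {h 1 ρ} ⊆ B := by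
      rw [htake 1 ρ hρ, hQ₂ρ, h1, Set.union_comm]
      exact union_inter_preimage_res_subset_left hlm (fun z hz w hw => (hsep w hw z hz).symm) hb
    intro σ hσ τ hτ hστ htk
    rcases hs.eq_or_eq_of_take_eq hσ hτ hστ htk with ⟨rfl, rfl⟩ | ⟨rfl, rfl⟩
    · rw [show (splitConfig x ρ le h c₁ c₂).2.2 (h 0 ρ) (h 1 ρ) = c₁ from if_pos ⟨rfl, rfl⟩]
      exact (Set.prod_mono hA' hB').trans hAB
    · rw [show (splitConfig x ρ le h c₁ c₂).2.2 (h 1 ρ) (h 0 ρ) = c₂ from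
        (if_neg fun hc => hsplit hc.1.symm).trans (if_pos ⟨rfl, rfl⟩)]
      exact (Set.prod_mono hB' hA').trans hBA

theorem isSplittingFamily_hasSquareWitness : IsSplittingFamily T (HasSquareWitness T) := by
  rintro x ⟨hne, Q, hQ⟩
  exact ⟨hQ.degsqBase hne, degsqStep_iff.2 ⟨hne, fun ρ hρ => hQ.exists_isSplit hρ⟩⟩

theorem exists_hasSquareWitness {P : Set (ℕ → Bool)} (hP : Perfect P) (hne : P.Nonempty)
    (hPT : P ×ˢ P ⊆ ⋃ c, lim2 (T c)) : ∃ x, HasSquareWitness T x := by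
  obtain ⟨c, D, hDP, hD, hDne, hDT⟩ :=
    exists_perfect_subset_forall_diag_mem_lim2 hP hne fun z hz => hPT ⟨hz, hz⟩
  refine ⟨⟨0, Set.univ, fun _ _ => c⟩, Set.univ_nonempty, fun _ => D,
    fun _ _ => hD, fun _ _ => hDne, fun _ _ _ _ => Subsingleton.elim _ _,
    fun _ _ => (Set.prod_mono hDP hDP).trans hPT,
    fun η _ ν _ hην => absurd (Subsingleton.elim η ν) hην, fun _ _ => hDT⟩

theorem stmt_12 (T : ℕ → Tree2) :
    ((∀ α : Ordinal.{0}, ∃ x : PfAp, degsqGe T α x) ↔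
      (∀ β < (Cardinal.aleph 1).ord, ∃ x : PfAp, degsqGe T β x)) ∧
    ((∀ α : Ordinal.{0}, ∃ x : PfAp, degsqGe T α x) ↔
      (∃ P : Set (ℕ → Bool), Perfect P ∧ P.Nonempty ∧
        P ×ˢ P ⊆ ⋃ n : ℕ, lim2 (T n))) := by
  rw [Cardinal.ord_aleph]
  have hb_a (hb : ∀ β < ω₁, ∃ x, degsqGe T β x) (α : Ordinal.{0}) : ∃ x, degsqGe T α x :=
    have ⟨x, hx⟩ := exists_forall_degsqGe_of_forall_lt_omega_one hb
    ⟨x, (isSplittingFamily_degsqGe_omega_one T).degsqGe hx α⟩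
  refine ⟨⟨fun ha β _ => ha β, hb_a⟩, fun ha => ?_, fun ⟨P, hP, hne, hPT⟩ α => ?_⟩
  · obtain ⟨x, hx⟩ := exists_forall_degsqGe_of_forall_lt_omega_one fun β _ => ha β
    exact (isSplittingFamily_degsqGe_omega_one T).exists_perfect_prod_subset hx
  · obtain ⟨x, hx⟩ := exists_hasSquareWitness hP hne hPT
    exact ⟨x, isSplittingFamily_hasSquareWitness.degsqGe hx α⟩

end Sh522
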